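/- Let G be a finite connected multigraph, Π a partition of V into connected parts with quotient simple graph G̃_Π, and fix a part s. Let D be a Π-boundary divisor of G. Then there is no effective divisor D₁ equivalent to D whose support intersects every part of Π. -/

import Mathlib

open Finset

/-- Laplacian of a loopless multigraph given by edge multiplicities `m`. -/
def lap {V : Type*} [Fintype V] [DecidableEq V] (m : V → V → ℕ) : Matrix V V ℤ :=
  fun u v => if u = v then (∑ w, (m u w : ℤ)) else -(m u v : ℤ)

/-- Number of edges at `v` crossing between `A` and `B`. -/
def degAB {V : Type*} [Fintype V] [DecidableEq V] (m : V → V → ℕ)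
    (A B : Finset V) (v : V) : ℕ :=
  if v ∈ A then ∑ u ∈ B, m v u else if v ∈ B then ∑ u ∈ A, m v u else 0

/-!
Write `D₁ = D + Lσ` and suppose that `D₁ ≥ 0` is nonzero at a point `x c` of every part `c`.
Order the vertices lexicographically: first by the vector recording which side of each cut, taken
in order, they lie on, then by their distance to `x c` inside their part `c`. At a vertex `v`
minimising `σ`, and earliest among those, `(Lσ) v` is at most minus the number of edges from `v`
to earlier vertices. That number is at least `D v`, and at least `D v + 1` unless `v` is one of the
`x c`: an edge counted by `D v` crosses a cut `i` with `v ∈ Xᵢ`, so its other end agrees with `v`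
on all earlier cuts and lies outside `Xᵢ`, hence comes earlier; no edge is counted twice, since two
vertices are separated by at most one cut; and `v ≠ x c` has a neighbour in its part closer to
`x c`, which lies on the same side of every cut as `v`. So `D₁ v ≤ 0`, and `D₁ v < 0` unless `v` is
some `x c`, a contradiction either way.

The tree structure of the cuts (a cut meeting an earlier one lies inside one of its sides) comes
from counting: a side meeting `n` parts contains at least `n - 1` cuts, while `V` meets `k + 1`
parts and contains only `k` cuts; equality for `V` forces equality for every side.
-/

theorem SimpleGraph.Reachable.exists_adj_dist_lt {α : Type*} {G : SimpleGraph α} {a b : α}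
    (h : G.Reachable a b) (hne : a ≠ b) : ∃ c, G.Adj c b ∧ G.dist a c < G.dist a b := by
  obtain ⟨W, hW⟩ := h.exists_walk_length_eq_dist
  have hnil : ¬ W.Nil := SimpleGraph.Walk.not_nil_of_ne hne
  refine ⟨W.penultimate, W.adj_penultimate hnil, ?_⟩
  calc G.dist a W.penultimate ≤ W.dropLast.length := SimpleGraph.dist_le _
    _ < G.dist a b := by
      rw [SimpleGraph.Walk.length_dropLast, hW]
      have := h.pos_dist_of_ne hne
      omega

theorem SimpleGraph.reachable_inf_fromRel_of_connected_induce {V ι : Type*} {G : SimpleGraph V}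
    {f : V → ι} (h : ∀ c, (G.induce {v | f v = c}).Connected) {u v : V} (huv : f u = f v) :
    (G ⊓ SimpleGraph.fromRel (fun a b => f a = f b)).Reachable u v := by
  let φ : G.induce {w | f w = f v} →g G ⊓ SimpleGraph.fromRel (fun a b => f a = f b) :=
    ⟨Subtype.val, fun {a b} hab =>
      ⟨hab, Subtype.coe_ne_coe.mpr hab.ne, Or.inl (a.2.trans b.2.symm)⟩⟩
  exact ((h (f v)).preconnected ⟨u, huv⟩ ⟨v, rfl⟩).map φ

def cutsIn {V : Type*} [DecidableEq V] {k : ℕ} (A B : Fin k → Finset V) (S : Finset V) :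
    Finset (Fin k) :=
  univ.filter (fun j => A j ∪ B j ⊆ S)

theorem insert_cutsIn_subset {V : Type*} [DecidableEq V] {k : ℕ} (A B : Fin k → Finset V)
    (j : Fin k) :
    insert j (cutsIn A B (A j) ∪ cutsIn A B (B j)) ⊆ cutsIn A B (A j ∪ B j) := by
  refine insert_subset (by simp [cutsIn]) (union_subset ?_ ?_) <;> intro i hi <;>
    refine mem_filter.mpr ⟨mem_univ i, (mem_filter.mp hi).2.trans ?_⟩
  exacts [subset_union_left, subset_union_right]

section

variable {V : Type*} [Fintype V] [DecidableEq V]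

theorem lap_mulVec_apply {m : V → V → ℕ} (hloop : ∀ v, m v v = 0) (σ : V → ℤ) (v : V) :
    ((lap m).mulVec σ) v = ∑ u, (m v u : ℤ) * (σ v - σ u) := by
  have hterm : ∀ u, lap m v u * σ u
      = (if v = u then (∑ w, (m v w : ℤ)) * σ v else 0) - m v u * σ u := by
    intro u
    by_cases h : v = u
    · subst h; simp [lap, hloop]
    · simp [lap, h]
  simp only [Matrix.mulVec, dotProduct, hterm, sum_sub_distrib, sum_ite_eq, mem_univ, if_true,
    mul_sub, sum_mul]

theorem exists_lap_mulVec_add_sum_le_zero [Nonempty V] {α : Type*} [LinearOrder α]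
    {m : V → V → ℕ} (hloop : ∀ v, m v v = 0) (σ : V → ℤ) (ρ : V → α) :
    ∃ v, ((lap m).mulVec σ) v + ∑ u ∈ univ.filter (fun u => ρ u < ρ v), (m v u : ℤ) ≤ 0 := by
  obtain ⟨v, -, hmin⟩ := exists_min_image univ (fun v => toLex (σ v, ρ v)) univ_nonempty
  refine ⟨v, ?_⟩
  rw [lap_mulVec_apply hloop, sum_filter, ← sum_add_distrib]
  refine sum_nonpos fun u _ => ?_
  have hvu := Prod.Lex.toLex_le_toLex.mp (hmin u (mem_univ u))
  have hm := (m v u).cast_nonneg (α := ℤ)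
  split_ifs with h
  · have : σ v < σ u := hvu.resolve_right fun h' => h'.2.not_gt h
    nlinarith
  · have : σ v ≤ σ u := by rcases hvu with h' | ⟨h', -⟩ <;> omega
    nlinarith

theorem exists_mem_eq_zero_of_le_sum_lt [Nonempty V] {α : Type*} [LinearOrder α]
    {m : V → V → ℕ} (hloop : ∀ v, m v v = 0) (ρ : V → α) (S : Set V) {D D₁ : V → ℤ}
    (hle : ∀ v, D v ≤ ∑ u ∈ univ.filter (fun u => ρ u < ρ v), (m v u : ℤ))
    (hlt : ∀ v ∉ S, D v < ∑ u ∈ univ.filter (fun u => ρ u < ρ v), (m v u : ℤ))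
    (hD₁ : ∀ v, 0 ≤ D₁ v) {σ : V → ℤ} (hσ : (lap m).mulVec σ = D₁ - D) :
    ∃ v ∈ S, D₁ v = 0 := by
  obtain ⟨v, hv⟩ := exists_lap_mulVec_add_sum_le_zero hloop σ ρ
  rw [hσ, Pi.sub_apply] at hv
  by_cases hvS : v ∈ S
  · exact ⟨v, hvS, le_antisymm (by linarith [hle v]) (hD₁ v)⟩
  · linarith [hlt v hvS, hD₁ v]

structure IsCutSequence {ι : Type*} [DecidableEq ι] {k : ℕ} (p : V → ι)
    (A B : Fin k → Finset V) : Prop where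
  disjoint : ∀ i, Disjoint (A i) (B i)
  left_nonempty : ∀ i, (A i).Nonempty
  right_nonempty : ∀ i, (B i).Nonempty
  union_eq_univ_or_side : ∀ i, A i ∪ B i = univ ∨ ∃ j < i, A i ∪ B i = A j ∨ A i ∪ B i = B j
  side_eq_union_or_part : ∀ i S, (S = A i ∨ S = B i) →
    (∃ j, i < j ∧ A j ∪ B j = S) ∨ ∃ c, S = univ.filter (fun v => p v = c)

namespace IsCutSequence

variable {ι : Type*} [DecidableEq ι] {k : ℕ} {p : V → ι} {A B : Fin k → Finset V}

theorem mem_side_iff_of_eq (hT : IsCutSequence p A B) {u v : V} (huv : p u = p v) (i : Fin k)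
    {S : Finset V} (hS : S = A i ∨ S = B i) : u ∈ S ↔ v ∈ S := by
  induction i using WellFoundedGT.induction generalizing S with
  | _ i ih =>
    rcases hT.side_eq_union_or_part i S hS with ⟨j, hij, rfl⟩ | ⟨c, rfl⟩
    · simp only [mem_union, ih j hij (Or.inl rfl), ih j hij (Or.inr rfl)]
    · simp [huv]

theorem not_union_subset_part (hT : IsCutSequence p A B) (j : Fin k) (c : ι) :
    ¬ A j ∪ B j ⊆ univ.filter (fun v => p v = c) := by
  intro h
  obtain ⟨a, ha⟩ := hT.left_nonempty j
  obtain ⟨b, hb⟩ := hT.right_nonempty j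
  have hpa : p a = c := (mem_filter.mp (h (mem_union_left _ ha))).2
  have hpb : p b = c := (mem_filter.mp (h (mem_union_right _ hb))).2
  have hbA : b ∈ A j := (hT.mem_side_iff_of_eq (hpa.trans hpb.symm) j (Or.inl rfl)).mp ha
  exact disjoint_left.mp (hT.disjoint j) hbA hb

theorem not_union_subset_side (hT : IsCutSequence p A B) (i : Fin k) {S : Finset V}
    (hS : S = A i ∨ S = B i) : ¬ A i ∪ B i ⊆ S := by
  rcases hS with rfl | rfl <;> intro h
  · obtain ⟨b, hb⟩ := hT.right_nonempty i
    exact disjoint_left.mp (hT.disjoint i) (h (mem_union_right _ hb)) hb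
  · obtain ⟨a, ha⟩ := hT.left_nonempty i
    exact disjoint_left.mp (hT.disjoint i) ha (h (mem_union_left _ ha))

theorem card_insert_cutsIn (hT : IsCutSequence p A B) (j : Fin k) :
    (insert j (cutsIn A B (A j) ∪ cutsIn A B (B j))).card
      = (cutsIn A B (A j)).card + (cutsIn A B (B j)).card + 1 := by
  have hdisj : Disjoint (cutsIn A B (A j)) (cutsIn A B (B j)) := by
    refine disjoint_left.mpr fun i hiA hiB => ?_
    obtain ⟨a, ha⟩ := hT.left_nonempty i
    exact disjoint_left.mp (hT.disjoint j) ((mem_filter.mp hiA).2 (mem_union_left _ ha))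
      ((mem_filter.mp hiB).2 (mem_union_left _ ha))
  have hj : j ∉ cutsIn A B (A j) ∪ cutsIn A B (B j) := by
    simp only [mem_union, cutsIn, mem_filter, mem_univ, true_and]
    exact fun h => h.elim (hT.not_union_subset_side j (Or.inl rfl))
      (hT.not_union_subset_side j (Or.inr rfl))
  rw [card_insert_of_notMem hj, card_union_of_disjoint hdisj]

theorem card_image_union (hT : IsCutSequence p A B) (j : Fin k) :
    ((A j ∪ B j).image p).card = ((A j).image p).card + ((B j).image p).card := by
  rw [image_union, card_union_of_disjoint]
  refine disjoint_left.mpr fun c hcA hcB => ?_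
  obtain ⟨a, ha, rfl⟩ := mem_image.mp hcA
  obtain ⟨b, hb, hba⟩ := mem_image.mp hcB
  exact disjoint_left.mp (hT.disjoint j) ((hT.mem_side_iff_of_eq hba j (Or.inl rfl)).mpr ha) hb

theorem card_image_side_le (hT : IsCutSequence p A B) (i : Fin k)
    {S : Finset V} (hS : S = A i ∨ S = B i) : (S.image p).card ≤ (cutsIn A B S).card + 1 := by
  induction i using WellFoundedGT.induction generalizing S with
  | _ i ih =>
    rcases hT.side_eq_union_or_part i S hS with ⟨j, hij, rfl⟩ | ⟨c, rfl⟩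
    · have hA := ih j hij (Or.inl rfl)
      have hB := ih j hij (Or.inr rfl)
      have hcard := card_le_card (insert_cutsIn_subset A B j)
      rw [hT.card_insert_cutsIn j] at hcard
      rw [hT.card_image_union j]
      omega
    · have hsub : (univ.filter (fun v => p v = c)).image p ⊆ {c} :=
        image_subset_iff.mpr fun a ha => mem_singleton.mpr (mem_filter.mp ha).2
      exact (card_le_card hsub).trans (by simp)

end IsCutSequence

theorem degAB_eq_sum_sdiff (m : V → V → ℕ) {A B X : Finset V} (hAB : Disjoint A B)
    (hX : X = A ∨ X = B) {v : V} (hv : v ∈ X) : degAB m A B v = ∑ u ∈ (A ∪ B) \ X, m v u := by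
  rcases hX with rfl | rfl
  · rw [degAB, if_pos hv, union_sdiff_left, sdiff_eq_self_of_disjoint hAB.symm]
  · rw [degAB, if_neg (disjoint_right.mp hAB hv), if_pos hv, union_sdiff_right,
      sdiff_eq_self_of_disjoint hAB]

def boundaryDivisor {k : ℕ} (m : V → V → ℕ) (A B X : Fin k → Finset V) (v : V) : ℤ :=
  ∑ i, if v ∈ X i then (degAB m (A i) (B i) v : ℤ) else 0

def sideVector {k : ℕ} (X : Fin k → Finset V) (v : V) : Lex (Fin k → Bool) :=
  toLex fun i => decide (v ∈ X i)

namespace IsCutSequence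

variable {k : ℕ} {p : V → Fin (k + 1)} {A B X : Fin k → Finset V}

theorem cutsIn_union_eq_and_card_image_side_eq (hT : IsCutSequence p A B) (j : Fin k)
    (h : ((A j ∪ B j).image p).card = (cutsIn A B (A j ∪ B j)).card + 1) :
    cutsIn A B (A j ∪ B j) = insert j (cutsIn A B (A j) ∪ cutsIn A B (B j)) ∧
      ∀ S, (S = A j ∨ S = B j) → (S.image p).card = (cutsIn A B S).card + 1 := by
  have hA := hT.card_image_side_le j (Or.inl rfl)
  have hB := hT.card_image_side_le j (Or.inr rfl)
  have hsub := insert_cutsIn_subset A B j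
  have hcard := hT.card_insert_cutsIn j
  have hY := card_le_card hsub
  rw [hT.card_image_union j] at h
  refine ⟨(eq_of_subset_of_card_le hsub (by omega)).symm, ?_⟩
  rintro S (rfl | rfl) <;> omega

theorem card_image_union_eq (hT : IsCutSequence p A B) (hp : Function.Surjective p) (i : Fin k) :
    ((A i ∪ B i).image p).card = (cutsIn A B (A i ∪ B i)).card + 1 := by
  induction i using WellFoundedLT.induction with
  | _ i ih =>
    rcases hT.union_eq_univ_or_side i with hroot | ⟨t, hti, hside⟩
    · rw [hroot, image_univ_of_surjective hp, cutsIn, filter_true_of_mem fun _ _ => subset_univ _]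
      simp
    · exact (hT.cutsIn_union_eq_and_card_image_side_eq t (ih t hti)).2 _ hside

theorem cutsIn_union_eq (hT : IsCutSequence p A B) (hp : Function.Surjective p) (i : Fin k) :
    cutsIn A B (A i ∪ B i) = insert i (cutsIn A B (A i) ∪ cutsIn A B (B i)) :=
  (hT.cutsIn_union_eq_and_card_image_side_eq i (hT.card_image_union_eq hp i)).1

theorem lt_of_union_subset_side (hT : IsCutSequence p A B) (hp : Function.Surjective p)
    {i j : Fin k} {S : Finset V} (hS : S = A i ∨ S = B i) (hj : A j ∪ B j ⊆ S) : i < j := by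
  induction i using WellFoundedGT.induction generalizing S with
  | _ i ih =>
    rcases hT.side_eq_union_or_part i S hS with ⟨t, hit, rfl⟩ | ⟨c, rfl⟩
    · have hmem : j ∈ cutsIn A B (A t ∪ B t) := mem_filter.mpr ⟨mem_univ j, hj⟩
      rw [hT.cutsIn_union_eq hp t, mem_insert, mem_union] at hmem
      rcases hmem with rfl | h | h
      · exact hit
      · exact hit.trans (ih t hit (Or.inl rfl) (mem_filter.mp h).2)
      · exact hit.trans (ih t hit (Or.inr rfl) (mem_filter.mp h).2)
    · exact absurd hj (hT.not_union_subset_part j c)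

theorem le_of_union_subset_union (hT : IsCutSequence p A B) (hp : Function.Surjective p)
    {i j : Fin k} (h : A j ∪ B j ⊆ A i ∪ B i) : i ≤ j := by
  have hmem : j ∈ cutsIn A B (A i ∪ B i) := mem_filter.mpr ⟨mem_univ j, h⟩
  rw [hT.cutsIn_union_eq hp i, mem_insert, mem_union] at hmem
  rcases hmem with rfl | h | h
  · exact le_rfl
  · exact (hT.lt_of_union_subset_side hp (Or.inl rfl) (mem_filter.mp h).2).le
  · exact (hT.lt_of_union_subset_side hp (Or.inr rfl) (mem_filter.mp h).2).le

theorem laminar (hT : IsCutSequence p A B) (hp : Function.Surjective p) {i j : Fin k}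
    (hji : j < i) :
    A i ∪ B i ⊆ A j ∨ A i ∪ B i ⊆ B j ∨ Disjoint (A i ∪ B i) (A j ∪ B j) := by
  induction i using WellFoundedLT.induction generalizing j with
  | _ i ih =>
    have not_subset : ¬ A j ∪ B j ⊆ A i ∪ B i := fun h =>
      (hT.le_of_union_subset_union hp h).not_gt hji
    rcases hT.union_eq_univ_or_side i with hroot | ⟨t, hti, hside⟩
    · exact absurd (hroot ▸ subset_univ _) not_subset
    have hYit : A i ∪ B i ⊆ A t ∪ B t := by
      rcases hside with h | h <;> rw [h]
      exacts [subset_union_left, subset_union_right]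
    rcases lt_trichotomy j t with hjt | rfl | htj
    · rcases ih t hti hjt with h | h | h
      exacts [Or.inl (hYit.trans h), Or.inr (Or.inl (hYit.trans h)),
        Or.inr (Or.inr (h.mono_left hYit))]
    · rcases hside with h | h
      exacts [Or.inl h.le, Or.inr (Or.inl h.le)]
    · refine Or.inr (Or.inr ?_)
      rcases ih j hji htj with h | h | h <;> rcases hside with hs | hs
      · exact absurd (hs ▸ h) not_subset
      · rw [hs]; exact (hT.disjoint t).symm.mono_right h
      · rw [hs]; exact (hT.disjoint t).mono_right h
      · exact absurd (hs ▸ h) not_subset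
      all_goals exact h.symm.mono_left hYit

theorem mem_side_iff_of_mem_union (hT : IsCutSequence p A B) (hp : Function.Surjective p)
    {i j : Fin k} (hji : j < i) {u v : V} (hu : u ∈ A i ∪ B i) (hv : v ∈ A i ∪ B i)
    {S : Finset V} (hS : S = A j ∨ S = B j) : u ∈ S ↔ v ∈ S := by
  have hAB := disjoint_left.mp (hT.disjoint j)
  rcases hT.laminar hp hji with h | h | h
  · rcases hS with rfl | rfl
    · exact iff_of_true (h hu) (h hv)
    · exact iff_of_false (hAB (h hu)) (hAB (h hv))
  · rcases hS with rfl | rfl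
    · exact iff_of_false (fun hu' => hAB hu' (h hu)) (fun hv' => hAB hv' (h hv))
    · exact iff_of_true (h hu) (h hv)
  · have hSY : S ⊆ A j ∪ B j := by
      rcases hS with rfl | rfl
      exacts [subset_union_left, subset_union_right]
    exact iff_of_false (fun hu' => disjoint_left.mp h hu (hSY hu'))
      (fun hv' => disjoint_left.mp h hv (hSY hv'))

theorem sideVector_eq_of_eq (hT : IsCutSequence p A B) (hX : ∀ i, X i = A i ∨ X i = B i)
    {u v : V} (huv : p u = p v) : sideVector X u = sideVector X v := by
  funext i
  simp [sideVector, hT.mem_side_iff_of_eq huv i (hX i)]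

theorem mem_iff_of_lt (hT : IsCutSequence p A B) (hp : Function.Surjective p)
    (hX : ∀ i, X i = A i ∨ X i = B i) {i j : Fin k} (hji : j < i) {u v : V}
    (hu : u ∈ A i ∪ B i) (hv : v ∈ X i) : u ∈ X j ↔ v ∈ X j := by
  have hvY : v ∈ A i ∪ B i := by rcases hX i with h | h <;> simp [← h, hv]
  exact hT.mem_side_iff_of_mem_union hp hji hu hvY (hX j)

theorem sideVector_lt (hT : IsCutSequence p A B) (hp : Function.Surjective p)
    (hX : ∀ i, X i = A i ∨ X i = B i) {i : Fin k} {u v : V} (hv : v ∈ X i)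
    (hu : u ∈ (A i ∪ B i) \ X i) : sideVector X u < sideVector X v := by
  refine ⟨i, fun j hji => ?_, by simp [sideVector, hv, (mem_sdiff.mp hu).2]⟩
  simp [sideVector, hT.mem_iff_of_lt hp hX hji (mem_sdiff.mp hu).1 hv]

theorem eq_of_mem_sdiff (hT : IsCutSequence p A B) (hp : Function.Surjective p)
    (hX : ∀ i, X i = A i ∨ X i = B i) {i j : Fin k} {u v : V}
    (hvi : v ∈ X i) (hui : u ∈ (A i ∪ B i) \ X i) (hvj : v ∈ X j) (huj : u ∈ (A j ∪ B j) \ X j) :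
    i = j := by
  rcases lt_trichotomy i j with h | rfl | h
  · exact ((mem_sdiff.mp hui).2 ((hT.mem_iff_of_lt hp hX h (mem_sdiff.mp huj).1 hvj).mpr hvi)).elim
  · rfl
  · exact ((mem_sdiff.mp huj).2 ((hT.mem_iff_of_lt hp hX h (mem_sdiff.mp hui).1 hvi).mpr hvj)).elim

theorem boundaryDivisor_add_sum_le (hT : IsCutSequence p A B) (hp : Function.Surjective p)
    (hX : ∀ i, X i = A i ∨ X i = B i) (m : V → V → ℕ) {α : Type*} [LinearOrder α]
    {ρ : V → α} (hρ : ∀ u v, sideVector X u < sideVector X v → ρ u < ρ v) (v : V) :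
    boundaryDivisor m A B X v + ∑ u ∈ univ.filter (fun u => p u = p v ∧ ρ u < ρ v), (m v u : ℤ)
      ≤ ∑ u ∈ univ.filter (fun u => ρ u < ρ v), (m v u : ℤ) := by
  set T : Fin k → Finset V := fun i => ((A i ∪ B i) \ X i).filter fun _ => v ∈ X i
  have hmemT : ∀ {i u}, u ∈ T i → v ∈ X i ∧ u ∈ (A i ∪ B i) \ X i :=
    fun hu => (mem_filter.mp hu).symm
  have hboundary : boundaryDivisor m A B X v = ∑ u ∈ univ.biUnion T, (m v u : ℤ) := by
    rw [sum_biUnion fun i _ j _ hij => disjoint_left.mpr fun u hi hj =>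
      hij (hT.eq_of_mem_sdiff hp hX (hmemT hi).1 (hmemT hi).2 (hmemT hj).1 (hmemT hj).2)]
    refine sum_congr rfl fun i _ => ?_
    by_cases hv : v ∈ X i
    · simp [T, hv, degAB_eq_sum_sdiff m (hT.disjoint i) (hX i) hv]
    · simp [T, hv]
  have hdisj : Disjoint (univ.biUnion T) (univ.filter (fun u => p u = p v ∧ ρ u < ρ v)) := by
    refine disjoint_left.mpr fun u hu hsame => ?_
    obtain ⟨i, -, hui⟩ := mem_biUnion.mp hu
    obtain ⟨hv, hu⟩ := hmemT hui
    exact (mem_sdiff.mp hu).2 ((hT.mem_side_iff_of_eq (mem_filter.mp hsame).2.1 i (hX i)).mpr hv)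
  have hsub : univ.biUnion T ∪ univ.filter (fun u => p u = p v ∧ ρ u < ρ v)
      ⊆ univ.filter (fun u => ρ u < ρ v) := by
    refine union_subset (fun u hu => ?_)
      fun u hu => mem_filter.mpr ⟨mem_univ u, (mem_filter.mp hu).2.2⟩
    obtain ⟨i, -, hui⟩ := mem_biUnion.mp hu
    exact mem_filter.mpr ⟨mem_univ u, hρ u v (hT.sideVector_lt hp hX (hmemT hui).1 (hmemT hui).2)⟩
  rw [hboundary, ← sum_union hdisj]
  exact sum_le_sum_of_subset_of_nonneg hsub fun _ _ _ => Nat.cast_nonneg _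

theorem exists_boundaryDivisor_le_sum_lt (hT : IsCutSequence p A B) (hp : Function.Surjective p)
    (hX : ∀ i, X i = A i ∨ X i = B i) {m : V → V → ℕ} (hsymm : ∀ u v, m u v = m v u)
    (hpconn : ∀ c, ((SimpleGraph.fromRel (fun u v => 0 < m u v)).induce {v | p v = c}).Connected)
    (x : Fin (k + 1) → V) (hx : ∀ c, p (x c) = c) :
    ∃ ρ : V → Lex (Lex (Fin k → Bool) × ℕ),
      (∀ v, boundaryDivisor m A B X v ≤ ∑ u ∈ univ.filter (fun u => ρ u < ρ v), (m v u : ℤ)) ∧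
      ∀ v ∉ Set.range x,
        boundaryDivisor m A B X v < ∑ u ∈ univ.filter (fun u => ρ u < ρ v), (m v u : ℤ) := by
  let H := SimpleGraph.fromRel (fun u v => 0 < m u v) ⊓ SimpleGraph.fromRel (fun a b => p a = p b)
  let ρ : V → Lex (Lex (Fin k → Bool) × ℕ) := fun v => toLex (sideVector X v, H.dist (x (p v)) v)
  have hρ : ∀ u v, sideVector X u < sideVector X v → ρ u < ρ v :=
    fun u v h => Prod.Lex.toLex_lt_toLex.mpr (Or.inl h)
  refine ⟨ρ, fun v => ?_, fun v hv => ?_⟩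
  · have hsame : 0 ≤ ∑ u ∈ univ.filter (fun u => p u = p v ∧ ρ u < ρ v), (m v u : ℤ) :=
      sum_nonneg fun u _ => Nat.cast_nonneg _
    linarith [hT.boundaryDivisor_add_sum_le hp hX m hρ v]
  have hne : x (p v) ≠ v := fun h => hv ⟨p v, h⟩
  obtain ⟨u, ⟨hadj, -, hpuv⟩, hdist⟩ :=
    (SimpleGraph.reachable_inf_fromRel_of_connected_induce hpconn (hx (p v))).exists_adj_dist_lt hne
  have hpuv : p u = p v := hpuv.elim id Eq.symm
  have hmvu : 0 < m v u := by
    rcases (SimpleGraph.fromRel_adj _ _ _).mp hadj with ⟨-, h | h⟩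
    exacts [hsymm u v ▸ h, h]
  have hρuv : ρ u < ρ v := Prod.Lex.toLex_lt_toLex.mpr
    (Or.inr ⟨hT.sideVector_eq_of_eq hX hpuv, by simpa [hpuv] using hdist⟩)
  have hsame : (m v u : ℤ) ≤ ∑ w ∈ univ.filter (fun w => p w = p v ∧ ρ w < ρ v), (m v w : ℤ) :=
    single_le_sum (fun w _ => Nat.cast_nonneg _) (mem_filter.mpr ⟨mem_univ u, hpuv, hρuv⟩)
  have := hT.boundaryDivisor_add_sum_le hp hX m hρ v
  omega

end IsCutSequence

theorem IsCutSequence.of_root {ι : Type*} [DecidableEq ι] {k : ℕ} (hk : 0 < k) {p : V → ι}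
    {A B : Fin k → Finset V} (hdisj : ∀ i, Disjoint (A i) (B i))
    (hAne : ∀ i, (A i).Nonempty) (hBne : ∀ i, (B i).Nonempty)
    (hroot : A ⟨0, hk⟩ ∪ B ⟨0, hk⟩ = univ)
    (htree : ∀ i : Fin k, i.1 ≠ 0 → ∃ j : Fin k, j < i ∧ (A i ∪ B i = A j ∨ A i ∪ B i = B j))
    (hleafA : ∀ i : Fin k, (∃ j : Fin k, i < j ∧ A j ∪ B j = A i) ∨
      (∃ c, A i = univ.filter (fun v => p v = c)))
    (hleafB : ∀ i : Fin k, (∃ j : Fin k, i < j ∧ A j ∪ B j = B i) ∨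
      (∃ c, B i = univ.filter (fun v => p v = c))) :
    IsCutSequence p A B where
  disjoint := hdisj
  left_nonempty := hAne
  right_nonempty := hBne
  union_eq_univ_or_side i := by
    by_cases hi : i.1 = 0
    · exact Or.inl (by rwa [show i = ⟨0, hk⟩ from Fin.ext hi])
    · exact Or.inr (htree i hi)
  side_eq_union_or_part := by
    rintro i S (rfl | rfl)
    exacts [hleafA i, hleafB i]

end

theorem stmt10_general {V : Type*} [Fintype V] [DecidableEq V] (k : ℕ) (hk : 0 < k)
    (m : V → V → ℕ) (hsymm : ∀ u v, m u v = m v u) (hloop : ∀ v, m v v = 0)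
    -- the partition Π into k+1 connected parts, given by the part map `p`
    (p : V → Fin (k+1)) (hsurj : Function.Surjective p)
    (hpconn : ∀ c, ((SimpleGraph.fromRel (fun u v => 0 < m u v)).induce {v : V | p v = c}).Connected)
    -- a generating sequence of cuts (Cᵢ splits a previously produced component into Aᵢ, Bᵢ)
    (A B X : Fin k → Finset V)
    (hX : ∀ i, X i = A i ∨ X i = B i)
    (hdisj : ∀ i, Disjoint (A i) (B i))
    (hAne : ∀ i, (A i).Nonempty) (hBne : ∀ i, (B i).Nonempty)
    (hroot : A ⟨0, hk⟩ ∪ B ⟨0, hk⟩ = Finset.univ)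
    (htree : ∀ i : Fin k, i.1 ≠ 0 →
      ∃ j : Fin k, j < i ∧ (A i ∪ B i = A j ∨ A i ∪ B i = B j))
    -- each side is either cut further later, or is a part of Π
    (hleafA : ∀ i : Fin k, (∃ j : Fin k, i < j ∧ A j ∪ B j = A i) ∨
      (∃ c : Fin (k+1), A i = Finset.univ.filter (fun v => p v = c)))
    (hleafB : ∀ i : Fin k, (∃ j : Fin k, i < j ∧ A j ∪ B j = B i) ∨
      (∃ c : Fin (k+1), B i = Finset.univ.filter (fun v => p v = c)))
    -- the boundary divisor
    (D : V → ℤ)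
    (hD : D = fun v => ∑ i : Fin k, (if v ∈ X i then (degAB m (A i) (B i) v : ℤ) else 0)) :
    ¬ ∃ D₁ : V → ℤ, (∀ v, 0 ≤ D₁ v) ∧ (∃ σ : V → ℤ, (lap m).mulVec σ = D₁ - D) ∧
      (∀ c : Fin (k+1), ∃ v, p v = c ∧ D₁ v ≠ 0) := by
  rintro ⟨D₁, hD₁, ⟨σ, hσ⟩, hsupp⟩
  choose x hx hxD using hsupp
  have hT := IsCutSequence.of_root hk hdisj hAne hBne hroot htree hleafA hleafB
  obtain ⟨ρ, hle, hlt⟩ := hT.exists_boundaryDivisor_le_sum_lt hsurj hX hsymm hpconn x hx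
  subst hD
  have : Nonempty V := ⟨x 0⟩
  obtain ⟨-, ⟨c, rfl⟩, hc⟩ := exists_mem_eq_zero_of_le_sum_lt hloop ρ (Set.range x) hle hlt hD₁ hσ
  exact hxD c hc

/-- A Π-boundary divisor has no equivalent effective divisor supported in every part of Π. -/
theorem stmt10 {V : Type*} [Fintype V] [DecidableEq V] (k : ℕ) (hk : 0 < k)
    (m : V → V → ℕ) (hsymm : ∀ u v, m u v = m v u) (hloop : ∀ v, m v v = 0)
    (hconn : (SimpleGraph.fromRel (fun u v => 0 < m u v)).Connected)
    -- the partition Π into k+1 connected parts, given by the part map `p`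
    (p : V → Fin (k+1)) (hsurj : Function.Surjective p)
    (hpconn : ∀ c, ((SimpleGraph.fromRel (fun u v => 0 < m u v)).induce {v : V | p v = c}).Connected)
    -- a generating sequence of cuts (Cᵢ splits a previously produced component into Aᵢ, Bᵢ)
    (A B X : Fin k → Finset V)
    (hX : ∀ i, X i = A i ∨ X i = B i)
    (hdisj : ∀ i, Disjoint (A i) (B i))
    (hAne : ∀ i, (A i).Nonempty) (hBne : ∀ i, (B i).Nonempty)
    (hAconn : ∀ i, ((SimpleGraph.fromRel (fun u v => 0 < m u v)).induce (↑(A i))).Connected)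
    (hBconn : ∀ i, ((SimpleGraph.fromRel (fun u v => 0 < m u v)).induce (↑(B i))).Connected)
    (hroot : A ⟨0, hk⟩ ∪ B ⟨0, hk⟩ = Finset.univ)
    (htree : ∀ i : Fin k, i.1 ≠ 0 →
      ∃ j : Fin k, j < i ∧ (A i ∪ B i = A j ∨ A i ∪ B i = B j))
    -- each side is either cut further later, or is a part of Π
    (hleafA : ∀ i : Fin k, (∃ j : Fin k, i < j ∧ A j ∪ B j = A i) ∨
      (∃ c : Fin (k+1), A i = Finset.univ.filter (fun v => p v = c)))
    (hleafB : ∀ i : Fin k, (∃ j : Fin k, i < j ∧ A j ∪ B j = B i) ∨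
      (∃ c : Fin (k+1), B i = Finset.univ.filter (fun v => p v = c)))
    -- the sequence of cuts produces exactly the partition Π
    (hpartsleaf : ∀ c : Fin (k+1), ∃ i : Fin k,
      Finset.univ.filter (fun v => p v = c) = A i ∨
      Finset.univ.filter (fun v => p v = c) = B i)
    -- the boundary divisor
    (D : V → ℤ)
    (hD : D = fun v => ∑ i : Fin k, (if v ∈ X i then (degAB m (A i) (B i) v : ℤ) else 0)) :
    ¬ ∃ D₁ : V → ℤ, (∀ v, 0 ≤ D₁ v) ∧ (∃ σ : V → ℤ, (lap m).mulVec σ = D₁ - D) ∧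
      (∀ c : Fin (k+1), ∃ v, p v = c ∧ D₁ v ≠ 0) :=
  stmt10_general k hk m hsymm hloop p hsurj hpconn A B X hX hdisj hAne hBne hroot htree hleafA
    hleafB D hD
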